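/- Let w be a group word, G a group, and K a subgroup of G containing w(G) such that [K : C_K(x)] ≤ m for every w-value x ∈ G_w. Then for every w-value x, the normal closure ([w(G), x])^K is finite of order bounded by a function of m only. -/

import Mathlib

/-- The set of values of the word `w` in the group `G`. -/
def wValues {n : ℕ} (w : FreeGroup (Fin n)) (G : Type*) [Group G] : Set G :=
  {x | ∃ g : Fin n → G, FreeGroup.lift g w = x}

/-- The verbal subgroup of `G` determined by `w`. -/
def verbal {n : ℕ} (w : FreeGroup (Fin n)) (G : Type*) [Group G] : Subgroup G :=
  Subgroup.closure (wValues w G)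

/-- The normal closure in the subgroup `K` of the subgroup `S`. -/
def normalClosureIn {G : Type*} [Group G] (K S : Subgroup G) : Subgroup G :=
  Subgroup.closure {x : G | ∃ k ∈ K, ∃ s ∈ S, k * s * k⁻¹ = x}

open scoped commutatorElement

/-!
Let `A` be the `K`-conjugacy class of `x`, so `|A| ≤ m`, and let `T` be the subgroup generated by
the commutators `⁅y, z⁆` with `y` a `w`-value and `z ∈ A`. Then `T` is normalised by `K` and
contains `⁅h, x⁆` for every `h ∈ w(G)`, hence contains `[w(G), x]^K`.
Since `⁅y, z⁆ = (y z y⁻¹) z⁻¹ ∈ A / A`, the group `T` has at most `m²` generators and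
`C_K(A) ≤ C_K(T)`, so `[T : Z(T)] ≤ m ^ m` and Schur's theorem bounds `|T'|`. Each generator
`⁅y, z⁆` lies in the derived subgroup of `⟨y, z⟩`, whose centre has index at most `m²`, so it has
bounded order; thus the abelian group `T / T'`, generated by `m²` elements, is bounded too.
-/

open Subgroup
open scoped Nat Pointwise

section

variable {G : Type*} [Group G]

/-- Bounds `|G'|` once `[G : Z(G)] ≤ n`: this is `card_commutator_dvd_index_center_pow` with at
most `n ^ 2` commutators. -/
def schurBound (n : ℕ) : ℕ := n ^ (n ^ 3 + 1)

lemma commutatorElement_mul_mul_of_mem_center {a b z z' : G} (hz : z ∈ center G)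
    (hz' : z' ∈ center G) : ⁅a * z, b * z'⁆ = ⁅a, b⁆ := by
  rw [mem_center_iff] at hz hz'
  calc ⁅a * z, b * z'⁆ = a * (z * (b * z') * z⁻¹) * a⁻¹ * (b * z')⁻¹ := by
        rw [commutatorElement_def]; group
    _ = a * b * (z' * a⁻¹ * z'⁻¹) * b⁻¹ := by rw [← hz, mul_inv_cancel_right]; group
    _ = ⁅a, b⁆ := by rw [← hz', mul_inv_cancel_right, commutatorElement_def]

lemma finite_commutatorSet_of_index_center_ne_zero (h : (center G).index ≠ 0) :
    (commutatorSet G).Finite ∧ Nat.card (commutatorSet G) ≤ (center G).index ^ 2 := by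
  have : FiniteIndex (center G) := ⟨h⟩
  have hsub : commutatorSet G ⊆
      Set.range fun p : (G ⧸ center G) × (G ⧸ center G) => ⁅p.1.out, p.2.out⁆ := by
    rintro _ ⟨a, b, rfl⟩
    obtain ⟨z, hz⟩ := QuotientGroup.mk_out_eq_mul (center G) a
    obtain ⟨z', hz'⟩ := QuotientGroup.mk_out_eq_mul (center G) b
    exact ⟨((a : G ⧸ center G), (b : G ⧸ center G)), by
      simp only [hz, hz']; exact commutatorElement_mul_mul_of_mem_center z.2 z'.2⟩
  refine ⟨(Set.finite_range _).subset hsub, ?_⟩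
  calc Nat.card (commutatorSet G) ≤ Nat.card (Set.range _) :=
        Nat.card_mono (Set.finite_range _) hsub
    _ ≤ Nat.card ((G ⧸ center G) × (G ⧸ center G)) := Finite.card_range_le _
    _ = (center G).index ^ 2 := by rw [Nat.card_prod, ← index_eq_card, sq]

lemma card_commutator_le_schurBound {n : ℕ} (h0 : (center G).index ≠ 0)
    (hn : (center G).index ≤ n) :
    0 < Nat.card (commutator G) ∧ Nat.card (commutator G) ≤ schurBound n := by
  obtain ⟨hfin, hcard⟩ := finite_commutatorSet_of_index_center_ne_zero h0
  have : Finite (commutatorSet G) := hfin.to_subtype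
  have hdvd := card_commutator_dvd_index_center_pow G
  have hpos : 0 < (center G).index ^ ((center G).index * Nat.card (commutatorSet G) + 1) :=
    pow_pos (Nat.pos_of_ne_zero h0) _
  have hexp : (center G).index * Nat.card (commutatorSet G) ≤ n ^ 3 :=
    calc (center G).index * Nat.card (commutatorSet G) ≤ n * n ^ 2 :=
          Nat.mul_le_mul hn (hcard.trans (Nat.pow_le_pow_left hn 2))
      _ = n ^ 3 := by ring
  refine ⟨Nat.pos_of_dvd_of_pos hdvd hpos, (Nat.le_of_dvd hpos hdvd).trans ?_⟩
  exact (Nat.pow_le_pow_left hn _).trans (Nat.pow_le_pow_right (by omega) (by omega))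

lemma center_closure_eq_subgroupOf (S : Set G) :
    center (closure S) = (centralizer S).subgroupOf (closure S) := by
  ext c
  rw [mem_subgroupOf, ← centralizer_closure, mem_center_iff, mem_centralizer_iff]
  exact ⟨fun h g hg => congrArg Subtype.val (h ⟨g, hg⟩), fun h g => Subtype.ext (h g g.2)⟩

lemma index_center_closure_le {K : Subgroup G} {S : Set G} (hSK : closure S ≤ K)
    (h0 : (centralizer S).relIndex K ≠ 0) :
    (center (closure S)).index ≠ 0 ∧
      (center (closure S)).index ≤ (centralizer S).relIndex K := by
  rw [center_closure_eq_subgroupOf, ← relIndex]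
  exact ⟨fun h => h0 (relIndex_eq_zero_of_le_right hSK h), relIndex_le_of_le_right hSK h0⟩

lemma relIndex_centralizer_le_pow {K : Subgroup G} {S : Set G} {n : ℕ} (hS : S.Finite)
    (h : ∀ s ∈ S, (centralizer {s}).relIndex K ≠ 0 ∧ (centralizer {s}).relIndex K ≤ n) :
    (centralizer S).relIndex K ≠ 0 ∧ (centralizer S).relIndex K ≤ n ^ Nat.card S := by
  have : Fintype S := hS.fintype
  rw [centralizer_eq_iInf, ← iInf_subtype'']
  refine ⟨relIndex_iInf_ne_zero fun s => (h s s.2).1, (relIndex_iInf_le _).trans ?_⟩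
  rw [Nat.card_eq_fintype_card, ← Finset.card_univ]
  exact Finset.prod_le_pow_card _ _ _ fun s _ => (h s s.2).2

lemma card_abelianization_closure_le {S : Set G} {e : ℕ} (hS : S.Finite) (he : 0 < e)
    (hpow : ∀ s ∈ S, s ^ e = 1) :
    0 < Nat.card (Abelianization (closure S)) ∧
      Nat.card (Abelianization (closure S)) ≤ e ^ Nat.card S := by
  have : Finite S := hS.to_subtype
  have : Group.FG (closure S) := Group.closure_finite_fg S
  have hsurj : Function.Surjective (Abelianization.of (G := closure S)) :=
    QuotientGroup.mk_surjective
  have : Group.FG (Abelianization (closure S)) := Group.fg_of_surjective hsurj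
  have hexp : ∀ q : Abelianization (closure S), q ^ e = 1 := by
    intro q
    obtain ⟨⟨g, hg⟩, rfl⟩ := hsurj q
    induction hg using closure_induction with
    | mem s hs =>
      rw [← map_pow, show (⟨s, _⟩ : closure S) ^ e = 1 from Subtype.ext (hpow s hs), map_one]
    | one => exact (congrArg (· ^ e) (map_one Abelianization.of)).trans (one_pow e)
    | mul a b ha hb iha ihb =>
      rw [show (⟨a * b, mul_mem ha hb⟩ : closure S) = ⟨a, ha⟩ * ⟨b, hb⟩ from rfl, map_mul,
        mul_pow, iha, ihb, one_mul]
    | inv a ha iha =>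
      rw [show (⟨a⁻¹, inv_mem ha⟩ : closure S) = ⟨a, ha⟩⁻¹ from rfl, map_inv, inv_pow, iha,
        inv_one]
  have hdvd := card_dvd_exponent_pow_rank' _ hexp
  have hrank : Group.rank (Abelianization (closure S)) ≤ Nat.card S :=
    (Group.rank_le_of_surjective _ hsurj).trans (rank_closure_finite_le_nat_card S)
  have hpos : 0 < e ^ Group.rank (Abelianization (closure S)) := pow_pos he _
  exact ⟨Nat.pos_of_dvd_of_pos hdvd hpos,
    (Nat.le_of_dvd hpos hdvd).trans (Nat.pow_le_pow_right he hrank)⟩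

lemma card_closure_le_of_pow_eq_one {K : Subgroup G} {S : Set G} {e n : ℕ} (hS : S.Finite)
    (he : 0 < e) (hpow : ∀ s ∈ S, s ^ e = 1) (hSK : closure S ≤ K)
    (h0 : (centralizer S).relIndex K ≠ 0) (hn : (centralizer S).relIndex K ≤ n) :
    0 < Nat.card (closure S) ∧ Nat.card (closure S) ≤ e ^ Nat.card S * schurBound n := by
  obtain ⟨hc0, hcn⟩ := index_center_closure_le hSK h0
  obtain ⟨hd0, hdn⟩ := card_commutator_le_schurBound hc0 (hcn.trans hn)
  obtain ⟨ha0, han⟩ := card_abelianization_closure_le hS he hpow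
  rw [card_eq_card_quotient_mul_card_subgroup (commutator (closure S))]
  exact ⟨Nat.mul_pos ha0 hd0, Nat.mul_le_mul han hdn⟩

lemma commutatorElement_pow_eq_one_of_relIndex_le {K : Subgroup G} {y z : G} {n : ℕ}
    (hy : y ∈ K) (hz : z ∈ K)
    (hyn : (centralizer {y}).relIndex K ≠ 0 ∧ (centralizer {y}).relIndex K ≤ n)
    (hzn : (centralizer {z}).relIndex K ≠ 0 ∧ (centralizer {z}).relIndex K ≤ n) :
    ⁅y, z⁆ ^ (schurBound (n ^ 2))! = 1 := by
  set P := closure ({y, z} : Set G)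
  have hPK : P ≤ K := (closure_le K).mpr (Set.insert_subset hy (Set.singleton_subset_iff.mpr hz))
  obtain ⟨h0, hn⟩ := relIndex_centralizer_le_pow (K := K) (Set.toFinite {y, z}) (n := n)
    (by rintro s (rfl | rfl); exacts [hyn, hzn])
  have hcard : Nat.card ({y, z} : Set G) ≤ 2 := by
    rw [Nat.card_coe_set_eq]; exact (Set.ncard_insert_le _ _).trans (by simp)
  obtain ⟨hc0, hcn⟩ := index_center_closure_le hPK h0
  obtain ⟨hpos, hle⟩ := card_commutator_le_schurBound hc0
    (hcn.trans (hn.trans (Nat.pow_le_pow_right (by omega) hcard)))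
  have hmem : ⁅(⟨y, subset_closure (by simp)⟩ : P), ⟨z, subset_closure (by simp)⟩⁆ ∈
      commutator P := commutator_mem_commutator (mem_top _) (mem_top _)
  obtain ⟨c, hc⟩ := Nat.dvd_factorial hpos hle
  have hcard_pow := pow_card_eq_one' (x := (⟨_, hmem⟩ : commutator P))
  rw [hc, pow_mul]
  exact (congrArg (fun g : commutator P => ((g : P) : G) ^ c) hcard_pow).trans (one_pow c)

section conjugatesIn

def conjugatesIn (K : Subgroup G) (x : G) : Set G := {a | ∃ g ∈ K, g * x * g⁻¹ = a}

variable {K : Subgroup G} {x : G}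

lemma mem_conjugatesIn_self : x ∈ conjugatesIn K x := ⟨1, one_mem K, by group⟩

lemma le_normalizer_conjugatesIn : K ≤ normalizer (conjugatesIn K x) :=
  le_set_normalizer_iff.mpr fun g hg _ ⟨g', hg', hx⟩ =>
    ⟨g * g', mul_mem hg hg', by rw [← hx]; group⟩

lemma conjugatesIn_subset {X : Set G} (hKX : K ≤ normalizer X) (hx : x ∈ X) :
    conjugatesIn K x ⊆ X := by
  rintro _ ⟨g, hg, rfl⟩
  exact (hKX hg x).mp hx

lemma finite_conjugatesIn (h0 : (centralizer {x}).relIndex K ≠ 0) :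
    (conjugatesIn K x).Finite ∧ Nat.card (conjugatesIn K x) ≤ (centralizer {x}).relIndex K := by
  have : FiniteIndex ((centralizer {x}).subgroupOf K) := ⟨h0⟩
  have hsub : conjugatesIn K x ⊆ Set.range
      fun q : K ⧸ (centralizer {x}).subgroupOf K => (q.out : G) * x * (q.out : G)⁻¹ := by
    rintro _ ⟨g, hg, rfl⟩
    obtain ⟨c, hc⟩ := QuotientGroup.mk_out_eq_mul _ (⟨g, hg⟩ : K)
    have hcx : (c : G) * x = x * c := mem_centralizer_singleton_iff.mp (mem_subgroupOf.mp c.2)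
    refine ⟨(⟨g, hg⟩ : K), ?_⟩
    simp only [hc, coe_mul, mul_inv_rev]
    rw [← mul_assoc, mul_assoc _ _ x, hcx]
    group
  refine ⟨(Set.finite_range _).subset hsub, ?_⟩
  calc Nat.card (conjugatesIn K x) ≤ Nat.card (Set.range _) :=
        Nat.card_mono (Set.finite_range _) hsub
    _ ≤ Nat.card (K ⧸ (centralizer {x}).subgroupOf K) := Finite.card_range_le _
    _ = (centralizer {x}).relIndex K := rfl

end conjugatesIn

lemma normalClosureIn_le {K S T : Subgroup G} (hST : S ≤ T) (hKT : K ≤ normalizer (T : Set G)) :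
    normalClosureIn K S ≤ T :=
  (closure_le T).mpr fun _ ⟨_, hk, _, hs, hx⟩ => hx ▸ (hKT hk _).mp (hST hs)

lemma commutatorElement_mem_of_mem_closure {K T : Subgroup G} {X : Set G} {x h : G}
    (hXK : closure X ≤ K) (hKT : K ≤ normalizer (T : Set G)) (hX : ∀ y ∈ X, ⁅y, x⁆ ∈ T)
    (hh : h ∈ closure X) : ⁅h, x⁆ ∈ T := by
  induction hh using closure_induction with
  | mem y hy => exact hX y hy
  | one => rw [commutatorElement_one_left]; exact one_mem T
  | mul a b ha _ iha ihb =>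
    rw [show ⁅a * b, x⁆ = a * ⁅b, x⁆ * a⁻¹ * ⁅a, x⁆ by simp only [commutatorElement_def]; group]
    exact mul_mem ((hKT (hXK ha) _).mp ihb) iha
  | inv a ha iha =>
    rw [show ⁅a⁻¹, x⁆ = a⁻¹ * ⁅a, x⁆⁻¹ * a⁻¹⁻¹ by simp only [commutatorElement_def]; group]
    exact (hKT (inv_mem (hXK ha)) _).mp (inv_mem iha)

section commutatorsWithConjugates

variable {K : Subgroup G} {X : Set G} {x : G}

lemma commutators_conjugatesIn_subset_div (hXK : closure X ≤ K) :
    {s | ∃ y ∈ X, ∃ z ∈ conjugatesIn K x, ⁅y, z⁆ = s} ⊆ conjugatesIn K x / conjugatesIn K x := by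
  rintro _ ⟨y, hy, z, hz, rfl⟩
  exact ⟨y * z * y⁻¹, (le_normalizer_conjugatesIn (hXK (subset_closure hy)) z).mp hz, z, hz,
    by rw [commutatorElement_def]; exact div_eq_mul_inv _ _⟩

lemma le_normalizer_closure_commutators_conjugatesIn (hKX : K ≤ normalizer X) :
    K ≤ normalizer (closure {s | ∃ y ∈ X, ∃ z ∈ conjugatesIn K x, ⁅y, z⁆ = s} : Set G) :=
  le_normalizer_closure_iff.mpr fun g hg _ ⟨y, hy, z, hz, hs⟩ => subset_closure
    ⟨g * y * g⁻¹, (hKX hg y).mp hy, g * z * g⁻¹, (le_normalizer_conjugatesIn hg z).mp hz,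
      by rw [← hs, conjugate_commutatorElement]⟩

theorem card_closure_commutators_conjugatesIn_le {m : ℕ} (hXK : closure X ≤ K)
    (hKX : K ≤ normalizer X)
    (hX : ∀ y ∈ X, (centralizer {y}).relIndex K ≠ 0 ∧ (centralizer {y}).relIndex K ≤ m)
    (hx : x ∈ X) :
    0 < Nat.card (closure {s | ∃ y ∈ X, ∃ z ∈ conjugatesIn K x, ⁅y, z⁆ = s}) ∧
      Nat.card (closure {s | ∃ y ∈ X, ∃ z ∈ conjugatesIn K x, ⁅y, z⁆ = s}) ≤
        (schurBound (m ^ 2))! ^ (m * m) * schurBound (m ^ m) := by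
  set A := conjugatesIn K x
  set S := {s | ∃ y ∈ X, ∃ z ∈ A, ⁅y, z⁆ = s}
  have hAX : A ⊆ X := conjugatesIn_subset hKX hx
  obtain ⟨hx0, hxm⟩ := hX x hx
  have hm : 1 ≤ m := (Nat.pos_of_ne_zero hx0).trans_le hxm
  obtain ⟨hAfin, hAcard⟩ := finite_conjugatesIn hx0
  have hSA := commutators_conjugatesIn_subset_div (x := x) hXK
  have hScard : Nat.card S ≤ m * m :=
    (Nat.card_mono (hAfin.div hAfin) hSA).trans (Set.natCard_div_le.trans
      (Nat.mul_le_mul (hAcard.trans hxm) (hAcard.trans hxm)))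
  have hpow : ∀ s ∈ S, s ^ (schurBound (m ^ 2))! = 1 := by
    rintro _ ⟨y, hy, z, hz, rfl⟩
    exact commutatorElement_pow_eq_one_of_relIndex_le (hXK (subset_closure hy))
      (hXK (subset_closure (hAX hz))) (hX y hy) (hX z (hAX hz))
  obtain ⟨hA0, hAm⟩ := relIndex_centralizer_le_pow hAfin fun a ha => hX a (hAX ha)
  have hSclosure : S ⊆ closure A := hSA.trans
    fun _ ⟨a, ha, b, hb, hab⟩ => hab ▸ div_mem (subset_closure ha) (subset_closure hb)
  have hdvd : (centralizer S).relIndex K ∣ (centralizer A).relIndex K :=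
    relIndex_dvd_of_le_left K (centralizer_closure A ▸ centralizer_le hSclosure)
  have hS0 : (centralizer S).relIndex K ≠ 0 := ne_zero_of_dvd_ne_zero hA0 hdvd
  have hSm : (centralizer S).relIndex K ≤ m ^ m :=
    (Nat.le_of_dvd (Nat.pos_of_ne_zero hA0) hdvd).trans
      (hAm.trans (Nat.pow_le_pow_right hm (hAcard.trans hxm)))
  have he : 0 < (schurBound (m ^ 2))! := Nat.factorial_pos _
  have hSK : closure S ≤ K := (closure_le K).mpr (hSclosure.trans ((closure_mono hAX).trans hXK))
  obtain ⟨hpos, hle⟩ :=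
    card_closure_le_of_pow_eq_one ((hAfin.div hAfin).subset hSA) he hpow hSK hS0 hSm
  exact ⟨hpos, hle.trans (Nat.mul_le_mul_right _ (Nat.pow_le_pow_right he hScard))⟩

end commutatorsWithConjugates

lemma conj_mem_wValues {n : ℕ} (w : FreeGroup (Fin n)) {x : G} (hx : x ∈ wValues w G) (g : G) :
    g * x * g⁻¹ ∈ wValues w G := by
  obtain ⟨c, rfl⟩ := hx
  exact ⟨fun i => g * c i * g⁻¹,
    (FreeGroup.lift_unique ((MulAut.conj g).toMonoidHom.comp (FreeGroup.lift c))
      fun i => by simp).symm⟩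

lemma normalizer_wValues {n : ℕ} (w : FreeGroup (Fin n)) : normalizer (wValues w G) = ⊤ :=
  eq_top_iff.mpr <| le_set_normalizer_iff.mpr fun g _ _ hx => conj_mem_wValues w hx g

theorem card_normalClosureIn_commutator_le {K : Subgroup G} {X : Set G} {m : ℕ} {x : G}
    (hXK : closure X ≤ K) (hKX : K ≤ normalizer X)
    (hX : ∀ y ∈ X, (centralizer {y}).relIndex K ≠ 0 ∧ (centralizer {y}).relIndex K ≤ m)
    (hx : x ∈ X) :
    0 < Nat.card (normalClosureIn K (closure {c | ∃ h ∈ closure X, ⁅h, x⁆ = c})) ∧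
      Nat.card (normalClosureIn K (closure {c | ∃ h ∈ closure X, ⁅h, x⁆ = c})) ≤
        (schurBound (m ^ 2))! ^ (m * m) * schurBound (m ^ m) := by
  obtain ⟨hpos, hle⟩ := card_closure_commutators_conjugatesIn_le hXK hKX hX hx
  have : Finite (closure {s | ∃ y ∈ X, ∃ z ∈ conjugatesIn K x, ⁅y, z⁆ = s}) :=
    Nat.finite_of_card_ne_zero hpos.ne'
  have hKT := le_normalizer_closure_commutators_conjugatesIn (x := x) hKX
  have hsub : normalClosureIn K (closure {c | ∃ h ∈ closure X, ⁅h, x⁆ = c}) ≤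
      closure {s | ∃ y ∈ X, ∃ z ∈ conjugatesIn K x, ⁅y, z⁆ = s} :=
    normalClosureIn_le ((closure_le _).mpr fun _ ⟨h, hh, hc⟩ => hc ▸
      commutatorElement_mem_of_mem_closure hXK hKT
        (fun y hy => subset_closure ⟨y, hy, x, mem_conjugatesIn_self, rfl⟩) hh) hKT
  have : Finite (normalClosureIn K (closure {c | ∃ h ∈ closure X, ⁅h, x⁆ = c})) :=
    Finite.of_injective _ (inclusion_injective hsub)
  exact ⟨Nat.card_pos, (card_le_of_le hsub).trans hle⟩

end

/-- Lemma 2.3b: if `w(G) ≤ K` and every `w`-value has centralizer of index at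
most `m` in `K`, then `[w(G), x]^K` has `m`-bounded finite order for every
`w`-value `x`. -/
theorem stmt_4 :
    ∃ f : ℕ → ℕ, ∀ (k m : ℕ) (G : Type*) [Group G] (w : FreeGroup (Fin k))
      (K : Subgroup G), verbal w G ≤ K →
      (∀ x ∈ wValues w G,
        0 < (Subgroup.centralizer {x}).relIndex K ∧
          (Subgroup.centralizer {x}).relIndex K ≤ m) →
      ∀ x ∈ wValues w G,
        0 < Nat.card (normalClosureIn K
            (Subgroup.closure {y : G | ∃ h ∈ verbal w G, ⁅h, x⁆ = y})) ∧
          Nat.card (normalClosureIn K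
            (Subgroup.closure {y : G | ∃ h ∈ verbal w G, ⁅h, x⁆ = y})) ≤ f m := by
  refine ⟨fun m => (schurBound (m ^ 2))! ^ (m * m) * schurBound (m ^ m), ?_⟩
  intro k m G _ w K hWK hcent x hx
  exact card_normalClosureIn_commutator_le hWK (le_top.trans_eq (normalizer_wValues w).symm)
    (fun y hy => ⟨(hcent y hy).1.ne', (hcent y hy).2⟩) hx
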